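/- arXiv:1409.3447 — 4 statements merged into one kernel-verified Lean document; each statement's English description precedes it below -/
import Mathlib

section
/- For any h₁,…,hₙ in a real inner product space H and any λ₁,…,λₙ ∈ ℝ, the inequality ∑_{j,k} λ_j λ_k (e^{⟨h_j,h_k⟩} − 1) ≤ ∑_{j,k} λ_j λ_k e^{⟨h_j,h_k⟩} ⟨h_j,h_k⟩ holds; equivalently, the matrix with entries b_{jk} = 1 − e^{⟨h_j,h_k⟩} + e^{⟨h_j,h_k⟩}⟨h_j,h_k⟩ is positive semi-definite. -/
/-!
Let `G` be the Gram matrix of `h₁, …, hₙ`. Expanding the exponential, the difference of the two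
sides is `∑ₘ (1/m! - 1/(m+1)!) ∑ⱼₖ λⱼ λₖ Gⱼₖ^(m+1)`. Each Hadamard power of the positive
semidefinite matrix `G` is positive semidefinite by the Schur product theorem, so every term of
this series is nonnegative.
-/

open Real RealInnerProductSpace Nat

namespace Matrix

open scoped ComplexOrder in
theorem PosSemidef.map_pow_succ {ι 𝕜 : Type*} [RCLike 𝕜] {A : Matrix ι ι 𝕜}
    (hA : A.PosSemidef) (m : ℕ) : (A.map (· ^ (m + 1))).PosSemidef := by
  induction m with
  | zero => simpa using hA
  | succ m ih =>
    have hsucc : A.map (· ^ (m + 2)) = A.map (· ^ (m + 1)) ⊙ A := by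
      ext
      simp [pow_succ]
    rw [hsucc]
    exact ih.hadamard hA

theorem PosSemidef.sum_sum_mul_mul_nonneg {ι : Type*} [Fintype ι] {A : Matrix ι ι ℝ}
    (hA : A.PosSemidef) (c : ι → ℝ) : 0 ≤ ∑ j, ∑ k, c j * c k * A j k := by
  refine (hA.dotProduct_mulVec_nonneg c).trans_eq ?_
  simp only [star_trivial, dotProduct, mulVec, Finset.mul_sum]
  exact Finset.sum_congr rfl fun j _ => Finset.sum_congr rfl fun k _ => by ring

end Matrix

theorem Real.hasSum_pow_succ_div_factorial_succ (y : ℝ) :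
    HasSum (fun m : ℕ => y ^ (m + 1) / (m + 1)!) (exp y - 1) := by
  refine (hasSum_nat_add_iff (f := fun m : ℕ => y ^ m / m !) 1).2 ?_
  simpa [Real.exp_eq_exp_ℝ] using NormedSpace.expSeries_div_hasSum_exp y

theorem Real.hasSum_pow_succ_div_factorial (y : ℝ) :
    HasSum (fun m : ℕ => y ^ (m + 1) / m !) (exp y * y) := by
  rw [Real.exp_eq_exp_ℝ, mul_comm]
  exact ((NormedSpace.expSeries_div_hasSum_exp y).mul_left y).congr_fun fun m => by ring

theorem Matrix.PosSemidef.sum_sum_mul_mul_exp_sub_one_le {ι : Type*} [Fintype ι]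
    {A : Matrix ι ι ℝ} (hA : A.PosSemidef) (c : ι → ℝ) :
    ∑ j, ∑ k, c j * c k * (exp (A j k) - 1) ≤ ∑ j, ∑ k, c j * c k * (exp (A j k) * A j k) := by
  have hasSum_div {f : ℝ → ℝ} {a : ℕ → ℝ} (hf : ∀ y, HasSum (fun m => y ^ (m + 1) / a m) (f y)) :
      HasSum (fun m => (∑ j, ∑ k, c j * c k * A j k ^ (m + 1)) / a m)
        (∑ j, ∑ k, c j * c k * f (A j k)) :=
    (hasSum_sum fun j _ => hasSum_sum fun k _ => (hf (A j k)).mul_left (c j * c k)).congr_fun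
      fun m => by simp only [Finset.sum_div, mul_div_assoc]
  refine hasSum_le (fun m => ?_) (hasSum_div hasSum_pow_succ_div_factorial_succ)
    (hasSum_div hasSum_pow_succ_div_factorial)
  exact div_le_div_of_nonneg_left ((hA.map_pow_succ m).sum_sum_mul_mul_nonneg c)
    (by positivity) (by exact_mod_cast factorial_le m.le_succ)

theorem exp_gram_poincare_matrix_ineq
    {H : Type*} [NormedAddCommGroup H] [InnerProductSpace ℝ H]
    (n : ℕ) (h : Fin n → H) (lam : Fin n → ℝ) :
    ∑ j, ∑ k, lam j * lam k * (Real.exp ⟪h j, h k⟫ - 1) ≤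
      ∑ j, ∑ k, lam j * lam k * (Real.exp ⟪h j, h k⟫ * ⟪h j, h k⟫) :=
  (Matrix.posSemidef_gram ℝ h).sum_sum_mul_mul_exp_sub_one_le lam
end

section
/- For a polynomial f : ℝ → ℝ and standard Gaussian measure μ on ℝ, (∫ f dμ)² = ∫ f² dμ + ∑_{l≥1} ((−1)^l / l!) ∫ (f^{(l)})² dμ, where f^{(l)} is the l-th derivative and the sum is finite since f is a polynomial. -/
/-!
Gaussian integration by parts, `E[X p] = m E[p] + v E[p']` for `X ~ N(m, v)`, is the only
analytic input. It shows that the Wick sums `W(f, g) = ∑ₗ (-v)^l / l! E[f⁽ˡ⁾ g⁽ˡ⁾]` satisfy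
`W(h X, g) = m W(h, g) + v W(h', g)`, the same recursion as `E[h X] E[g]`: expanding
`(h X)⁽ˡ⁾ = X h⁽ˡ⁾ + l h⁽ˡ⁻¹⁾` and integrating by parts leaves a telescoping sum. Induction on
the degree then gives `W(f, g) = E[f] E[g]`; the theorem is the case `g = f`, `m = 0`, `v = 1`.
-/

open MeasureTheory Polynomial ProbabilityTheory Finset
open scoped NNReal Nat

namespace ProbabilityTheory

variable {m : ℝ} {v : ℝ≥0}

lemma integrable_pow_gaussianReal (n : ℕ) :
    Integrable (fun x : ℝ => x ^ n) (gaussianReal m v) := by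
  have := (memLp_id_gaussianReal (μ := m) (v := v) n).integrable_norm_pow'
  exact this.mono' (by fun_prop) (.of_forall fun x => by simp)

lemma integrable_eval_gaussianReal (p : ℝ[X]) :
    Integrable (fun x => p.eval x) (gaussianReal m v) := by
  induction p using Polynomial.induction_on' with
  | add p q hp hq => simpa using hp.fun_add hq
  | monomial n c => simpa using (integrable_pow_gaussianReal n).const_mul c

variable (m v) in
noncomputable def gaussianPolyIntegral : ℝ[X] →ₗ[ℝ] ℝ where
  toFun p := ∫ x, p.eval x ∂gaussianReal m v
  map_add' p q := by
    simpa using integral_add (integrable_eval_gaussianReal p) (integrable_eval_gaussianReal q)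
  map_smul' c p := by simpa using integral_const_mul c _

lemma gaussianPolyIntegral_apply (p : ℝ[X]) :
    gaussianPolyIntegral m v p = ∫ x, p.eval x ∂gaussianReal m v := rfl

lemma gaussianPolyIntegral_C (c : ℝ) : gaussianPolyIntegral m v (C c) = c := by
  simp [gaussianPolyIntegral_apply]

lemma hasDerivAt_gaussianPDFReal (hv : v ≠ 0) (x : ℝ) :
    HasDerivAt (gaussianPDFReal m v) (-((x - m) / v) * gaussianPDFReal m v x) x := by
  have hexp : HasDerivAt (fun y => -(y - m) ^ 2 / (2 * v)) (-((x - m) / v)) x := by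
    refine ((((hasDerivAt_id x).sub_const m).pow 2).neg.div_const (2 * (v : ℝ))).congr_deriv ?_
    field_simp
    simp
  rw [gaussianPDFReal_def]
  refine (hexp.exp.const_mul _).congr_deriv ?_
  ring

lemma integrable_gaussianPDFReal_mul_eval (hv : v ≠ 0) (p : ℝ[X]) :
    Integrable (fun x => gaussianPDFReal m v x * p.eval x) := by
  have := integrable_eval_gaussianReal (m := m) (v := v) p
  rw [gaussianReal_of_var_ne_zero m hv,
    integrable_withDensity_iff_integrable_smul' (measurable_gaussianPDF m v)
      (.of_forall fun _ => gaussianPDF_lt_top)] at this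
  simpa using this

lemma gaussianPolyIntegral_X_mul (p : ℝ[X]) :
    gaussianPolyIntegral m v (X * p) =
      m * gaussianPolyIntegral m v p + v * gaussianPolyIntegral m v (derivative p) := by
  rcases eq_or_ne v 0 with rfl | hv
  · simp [gaussianPolyIntegral_apply, gaussianReal_zero_var]
  set q : ℝ[X] := derivative p - C (v : ℝ)⁻¹ * ((X - C m) * p)
  have hderiv (x : ℝ) : HasDerivAt (fun y => gaussianPDFReal m v y * p.eval y)
      (gaussianPDFReal m v x * q.eval x) x := by
    refine ((hasDerivAt_gaussianPDFReal (m := m) hv x).mul (p.hasDerivAt x)).congr_deriv ?_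
    simp only [q, eval_sub, eval_mul, eval_C, eval_X]
    ring
  have hzero := integral_eq_zero_of_hasDerivAt_of_integrable hderiv
    (integrable_gaussianPDFReal_mul_eval hv q) (integrable_gaussianPDFReal_mul_eval hv p)
  have hq : gaussianPolyIntegral m v q = 0 := by
    simpa [gaussianPolyIntegral_apply, integral_gaussianReal_eq_integral_smul hv] using hzero
  simp only [q, map_sub, C_mul', map_smul, sub_mul, smul_eq_mul] at hq
  field_simp at hq
  linear_combination -hq

noncomputable def wickCoeff (v : ℝ) (l : ℕ) : ℝ := (-v) ^ l / l !

lemma wickCoeff_succ_mul (v : ℝ) (l : ℕ) : wickCoeff v (l + 1) * (l + 1) = -v * wickCoeff v l := by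
  rw [wickCoeff, wickCoeff, Nat.factorial_succ]
  push_cast
  field_simp
  ring

variable (m v) in
/-- For `N > deg f` this is `E[f ⋄ g]`, the expectation of the Wick product. -/
noncomputable def wickSum (N : ℕ) (f g : ℝ[X]) : ℝ :=
  ∑ l ∈ range N, wickCoeff v l * gaussianPolyIntegral m v (derivative^[l] f * derivative^[l] g)

lemma wickSum_add_left (N : ℕ) (f₁ f₂ g : ℝ[X]) :
    wickSum m v N (f₁ + f₂) g = wickSum m v N f₁ g + wickSum m v N f₂ g := by
  simp only [wickSum, iterate_map_add, add_mul, map_add, mul_add, sum_add_distrib]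

lemma wickSum_C_left (N : ℕ) (c : ℝ) (g : ℝ[X]) :
    wickSum m v (N + 1) (C c) g = c * gaussianPolyIntegral m v g := by
  simp [wickSum, sum_range_succ', wickCoeff, C_mul']

lemma wickSum_mul_X_left {N : ℕ} (h g : ℝ[X]) (hN : h.natDegree < N) :
    wickSum m v (N + 1) (h * X) g =
      m * wickSum m v (N + 1) h g + v * wickSum m v (N + 1) (derivative h) g := by
  set J := gaussianPolyIntegral m v
  set u : ℕ → ℝ := fun l => v * wickCoeff v l * J (derivative^[l] h * derivative^[l + 1] g)
  set r : ℕ → ℝ := fun l => wickCoeff v l * l * J (derivative^[l - 1] h * derivative^[l] g)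
  have hterm (l : ℕ) : wickCoeff v l * J (derivative^[l] (h * X) * derivative^[l] g) =
      m * (wickCoeff v l * J (derivative^[l] h * derivative^[l] g)) +
        v * (wickCoeff v l * J (derivative^[l] (derivative h) * derivative^[l] g)) +
          (u l + r l) := by
    rw [iterate_derivative_mul_X, add_mul, map_add, mul_right_comm, mul_comm _ X,
      gaussianPolyIntegral_X_mul, derivative_mul, map_add,
      ← Function.iterate_succ_apply' derivative l h, ← Function.iterate_succ_apply' derivative l g,
      Function.iterate_succ_apply, nsmul_eq_mul, mul_assoc, ← C_eq_natCast, C_mul', map_smul,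
      smul_eq_mul]
    ring
  -- `r` is `-u` shifted by one, so `∑ u + ∑ r` telescopes to `u N = 0`.
  have hu : u N = 0 := by simp [u, iterate_derivative_eq_zero hN]
  have hr (l : ℕ) : r (l + 1) = -u l := by
    simp only [r, u, Nat.add_sub_cancel, Nat.cast_succ]
    linear_combination J (derivative^[l] h * derivative^[l + 1] g) * wickCoeff_succ_mul v l
  have hr0 : r 0 = 0 := by simp [r]
  calc wickSum m v (N + 1) (h * X) g
      = ∑ l ∈ range (N + 1), (m * (wickCoeff v l * J (derivative^[l] h * derivative^[l] g)) +
        v * (wickCoeff v l * J (derivative^[l] (derivative h) * derivative^[l] g)) +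
          (u l + r l)) := sum_congr rfl fun l _ => hterm l
    _ = m * wickSum m v (N + 1) h g + v * wickSum m v (N + 1) (derivative h) g +
          (∑ l ∈ range (N + 1), u l + ∑ l ∈ range (N + 1), r l) := by
      simp only [sum_add_distrib, ← mul_sum]
      rfl
    _ = m * wickSum m v (N + 1) h g + v * wickSum m v (N + 1) (derivative h) g := by
      rw [sum_range_succ u, hu, sum_range_succ' r, hr0]
      simp [hr]

lemma wickSum_eq_mul {N : ℕ} (f g : ℝ[X]) (hN : f.natDegree < N) :
    wickSum m v N f g = gaussianPolyIntegral m v f * gaussianPolyIntegral m v g := by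
  induction hd : f.natDegree using Nat.strong_induction_on generalizing f N with
  | _ d ih =>
  obtain ⟨N, rfl⟩ := Nat.exists_eq_add_one_of_ne_zero (Nat.ne_zero_of_lt hN)
  rcases Nat.eq_zero_or_pos d with rfl | hd_pos
  · rw [eq_C_of_natDegree_eq_zero hd, wickSum_C_left, gaussianPolyIntegral_C]
  set h := f.divX
  have hh : h.natDegree < d := by rw [natDegree_divX_eq_natDegree_tsub_one, hd]; omega
  have hh' : (derivative h).natDegree < d :=
    (natDegree_derivative_le h).trans_lt ((Nat.sub_le _ _).trans_lt hh)
  rw [← divX_mul_X_add f, wickSum_add_left, wickSum_C_left, wickSum_mul_X_left h g (by omega),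
    ih _ hh h (by omega) rfl, ih _ hh' _ (by omega) rfl, map_add, mul_comm h X,
    gaussianPolyIntegral_X_mul, gaussianPolyIntegral_C]
  ring

end ProbabilityTheory

theorem sq_integral_poly_eq (f : Polynomial ℝ) :
    (∫ x, f.eval x ∂(gaussianReal 0 1)) ^ 2 =
      (∫ x, f.eval x ^ 2 ∂(gaussianReal 0 1)) +
        ∑' l : ℕ, ((-1 : ℝ) ^ (l + 1) / (Nat.factorial (l + 1)) *
          ∫ x, ((derivative^[l + 1] f).eval x) ^ 2 ∂(gaussianReal 0 1)) := by
  have hsq (p : ℝ[X]) :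
      ∫ x, p.eval x ^ 2 ∂gaussianReal 0 1 = gaussianPolyIntegral 0 1 (p * p) := by
    simp [gaussianPolyIntegral_apply, sq]
  have htail (l : ℕ) (hl : l ∉ range f.natDegree) :
      (-1 : ℝ) ^ (l + 1) / (l + 1)! * ∫ x, (derivative^[l + 1] f).eval x ^ 2 ∂gaussianReal 0 1
        = 0 := by
    simp [iterate_derivative_eq_zero (Nat.lt_succ_of_le (not_lt.mp (mem_range.not.mp hl)))]
  rw [tsum_eq_sum htail, sq, ← gaussianPolyIntegral_apply,
    ← wickSum_eq_mul f f (Nat.lt_succ_self _), wickSum, sum_range_succ', add_comm]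
  simp [wickCoeff, hsq]
end

section
/- For any vectors h₁,…,hₙ in a real inner product space H, any λ₁,…,λₙ ∈ ℝ, and any k ∈ ℕ, the matrix with entries c_{jk} = 1 − e^{⟨h_j,h_k⟩} + ∑_{l=1}^{2k−1} ((−1)^{l+1}/l!) e^{⟨h_j,h_k⟩} ⟨h_j,h_k⟩^l is positive semi-definite, i.e. ∑_{j,k} λ_j λ_k c_{jk} ≥ 0. -/
/-!
Put `m = 2k - 1`. The kernel is `c(x) = 1 - eˣ ∑_{l ≤ m} (-x)ˡ / l!`, which vanishes at `0` and
has derivative `eˣ xᵐ / m!` (`m` odd), so `c(x) = ∫₀¹ uᵐ / m! · x^{m+1} e^{ux} du`. By the Schur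
product theorem every entrywise power of the Gram matrix `(⟪h_j, h_i⟫)` is positive semidefinite;
for `u ≥ 0` the entrywise function `x^{m+1} e^{ux}` is a series of such powers with nonnegative
coefficients, and the integral over `u ∈ [0, 1]` keeps the quadratic form nonnegative.
-/

open Real RealInnerProductSpace Finset Matrix
open scoped Nat

open scoped ComplexOrder in
theorem Matrix.PosSemidef.map_pow {𝕜 ι : Type*} [RCLike 𝕜] [Finite ι] {A : Matrix ι ι 𝕜}
    (hA : A.PosSemidef) (N : ℕ) : (A.map (· ^ N)).PosSemidef := by
  induction N with
  | zero =>
    have : A.map (· ^ 0) = vecMulVec 1 (star 1) := by ext; simp [vecMulVec]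
    exact this ▸ posSemidef_vecMulVec_self_star 1
  | succ N ih =>
    have : A.map (· ^ (N + 1)) = A.map (· ^ N) ⊙ A := by ext; simp [pow_succ]
    exact this ▸ ih.hadamard hA

section QuadraticForm

variable {ι : Type*} [Fintype ι] (c : ι → ℝ)

theorem Matrix.PosSemidef.sum_mul_mul_nonneg {A : Matrix ι ι ℝ} (hA : A.PosSemidef) :
    0 ≤ ∑ j, ∑ i, c j * c i * A j i := by
  refine (hA.dotProduct_mulVec_nonneg c).trans_eq ?_
  simp only [dotProduct, mulVec, star_trivial, mul_sum]
  exact sum_congr rfl fun j _ ↦ sum_congr rfl fun i _ ↦ by ring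

theorem sum_mul_mul_const_mul (a : ℝ) (g : ι → ι → ℝ) :
    ∑ j, ∑ i, c j * c i * (a * g j i) = a * ∑ j, ∑ i, c j * c i * g j i := by
  simp only [mul_sum]
  exact sum_congr rfl fun j _ ↦ sum_congr rfl fun i _ ↦ by ring

variable (X : ι → ι → ℝ)

theorem sum_mul_mul_nonneg_of_hasSum {F : ℕ → ℝ → ℝ} {f : ℝ → ℝ}
    (hF : ∀ x, HasSum (F · x) (f x)) (hpos : ∀ N, 0 ≤ ∑ j, ∑ i, c j * c i * F N (X j i)) :
    0 ≤ ∑ j, ∑ i, c j * c i * f (X j i) :=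
  (hasSum_sum fun j _ ↦ hasSum_sum fun i _ ↦ (hF (X j i)).mul_left (c j * c i)).nonneg hpos

theorem sum_mul_mul_nonneg_of_eq_intervalIntegral {F : ℝ → ℝ → ℝ} {f : ℝ → ℝ} {a b : ℝ}
    (hab : a ≤ b) (hF : ∀ x, f x = ∫ u in a..b, F u x) (hcont : ∀ x, Continuous (F · x))
    (hpos : ∀ u ∈ Set.Icc a b, 0 ≤ ∑ j, ∑ i, c j * c i * F u (X j i)) :
    0 ≤ ∑ j, ∑ i, c j * c i * f (X j i) := by
  have hcont' : ∀ j i, Continuous fun u ↦ c j * c i * F u (X j i) :=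
    fun j i ↦ (hcont _).const_mul _
  have hint : ∑ j, ∑ i, c j * c i * f (X j i) =
      ∫ u in a..b, ∑ j, ∑ i, c j * c i * F u (X j i) := by
    rw [intervalIntegral.integral_finsetSum fun j _ ↦
      (continuous_finsetSum _ fun i _ ↦ hcont' j i).intervalIntegrable a b]
    refine sum_congr rfl fun j _ ↦ ?_
    rw [intervalIntegral.integral_finsetSum fun i _ ↦ (hcont' j i).intervalIntegrable a b]
    simp only [hF, intervalIntegral.integral_const_mul]
  exact hint ▸ intervalIntegral.integral_nonneg hab hpos

end QuadraticForm

theorem hasSum_pow_mul_exp_mul (M : ℕ) (u x : ℝ) :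
    HasSum (fun N ↦ u ^ N / N ! * x ^ (M + N)) (x ^ M * exp (u * x)) := by
  have := (NormedSpace.expSeries_div_hasSum_exp (u * x)).mul_left (x ^ M)
  rw [← exp_eq_exp_ℝ] at this
  refine this.congr_fun fun N ↦ ?_
  ring

section Gram

variable {H ι : Type*} [NormedAddCommGroup H] [InnerProductSpace ℝ H] [Fintype ι]
  (v : ι → H) (c : ι → ℝ)

theorem sum_mul_mul_inner_pow_nonneg (N : ℕ) : 0 ≤ ∑ j, ∑ i, c j * c i * ⟪v j, v i⟫ ^ N :=
  ((posSemidef_gram ℝ v).map_pow N).sum_mul_mul_nonneg c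

theorem sum_mul_mul_inner_pow_mul_exp_nonneg (M : ℕ) {u : ℝ} (hu : 0 ≤ u) :
    0 ≤ ∑ j, ∑ i, c j * c i * (⟪v j, v i⟫ ^ M * exp (u * ⟪v j, v i⟫)) :=
  sum_mul_mul_nonneg_of_hasSum c (fun j i ↦ ⟪v j, v i⟫) (hasSum_pow_mul_exp_mul M u) fun N ↦ by
    rw [sum_mul_mul_const_mul]
    exact mul_nonneg (by positivity) (sum_mul_mul_inner_pow_nonneg v c _)

end Gram

theorem hasDerivAt_sum_range_pow_div_factorial (m : ℕ) (x : ℝ) :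
    HasDerivAt (fun x : ℝ ↦ ∑ l ∈ range (m + 1), x ^ l / l !) (∑ l ∈ range m, x ^ l / l !) x := by
  induction m with
  | zero => simpa using hasDerivAt_const x (1 : ℝ)
  | succ m ih =>
    simp_rw [sum_range_succ _ (m + 1)]
    refine (ih.add ((hasDerivAt_pow (m + 1) x).div_const ((m + 1)! : ℝ))).congr_deriv ?_
    rw [sum_range_succ, Nat.factorial_succ]
    push_cast
    field_simp

theorem hasDerivAt_one_sub_exp_mul_sum_range (m : ℕ) (x : ℝ) :
    HasDerivAt (fun x ↦ 1 - exp x * ∑ l ∈ range (m + 1), (-x) ^ l / l !)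
      (-(exp x * (-x) ^ m / m !)) x := by
  have hT := (hasDerivAt_sum_range_pow_div_factorial m (-x)).scomp x (hasDerivAt_neg x)
  refine ((hasDerivAt_const x (1 : ℝ)).sub ((hasDerivAt_exp x).mul hT)).congr_deriv ?_
  simp only [Function.comp_apply, sum_range_succ, smul_eq_mul]
  ring

theorem one_sub_exp_mul_sum_range_eq_integral (m : ℕ) (x : ℝ) :
    1 - exp x * ∑ l ∈ range (m + 1), (-x) ^ l / l ! =
      ∫ u in (0 : ℝ)..1, (-1) ^ (m + 1) * u ^ m / m ! * (x ^ (m + 1) * exp (u * x)) := by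
  have hcont : Continuous fun s : ℝ ↦ -(exp s * (-s) ^ m / m !) := by fun_prop
  have hftc := intervalIntegral.integral_eq_sub_of_hasDerivAt
    (fun s _ ↦ hasDerivAt_one_sub_exp_mul_sum_range m s) (hcont.intervalIntegrable 0 x)
  have h0 : (1 : ℝ) - exp 0 * ∑ l ∈ range (m + 1), (-0 : ℝ) ^ l / l ! = 0 := by
    simp [sum_range_succ']
  have hsub := intervalIntegral.smul_integral_comp_mul_left
    (fun s : ℝ ↦ -(exp s * (-s) ^ m / m !)) (a := 0) (b := 1) x
  rw [mul_zero, mul_one, hftc, h0, sub_zero, smul_eq_mul] at hsub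
  rw [← hsub, ← intervalIntegral.integral_const_mul]
  refine intervalIntegral.integral_congr fun u _ ↦ ?_
  rw [mul_comm x u, neg_pow (u * x), mul_pow, pow_succ, pow_succ]
  ring

theorem one_sub_exp_add_sum_Icc_eq (m : ℕ) (x : ℝ) :
    1 - exp x + ∑ l ∈ Icc 1 m, (-1 : ℝ) ^ (l + 1) / l ! * (exp x * x ^ l) =
      1 - exp x * ∑ l ∈ range (m + 1), (-x) ^ l / l ! := by
  rw [range_eq_Ico, sum_eq_sum_Ico_succ_bot (Nat.succ_pos m), Nat.succ_eq_add_one, zero_add,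
    Ico_add_one_right_eq_Icc, mul_add, mul_sum, ← sub_sub, sub_eq_add_neg _ (∑ _ ∈ _, _),
    ← sum_neg_distrib]
  congr 1
  · simp
  · refine sum_congr rfl fun l _ ↦ ?_
    rw [neg_pow, pow_succ]
    ring

theorem houdre_kagan_matrix_posSemidef
    {H : Type*} [NormedAddCommGroup H] [InnerProductSpace ℝ H]
    (n : ℕ) (h : Fin n → H) (lam : Fin n → ℝ) (k : ℕ) (hk : 1 ≤ k) :
    0 ≤ ∑ j, ∑ i, lam j * lam i *
      (1 - Real.exp ⟪h j, h i⟫ +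
        ∑ l ∈ Finset.Icc 1 (2 * k - 1),
          (-1 : ℝ) ^ (l + 1) / (Nat.factorial l) *
            (Real.exp ⟪h j, h i⟫ * ⟪h j, h i⟫ ^ l)) := by
  set m := 2 * k - 1
  have hsign : (-1 : ℝ) ^ (m + 1) = 1 := by
    rw [Nat.sub_add_cancel (by omega)]
    exact (even_two_mul k).neg_one_pow
  refine sum_mul_mul_nonneg_of_eq_intervalIntegral lam (fun j i ↦ ⟪h j, h i⟫) zero_le_one
    (fun x ↦ (one_sub_exp_add_sum_Icc_eq m x).trans (one_sub_exp_mul_sum_range_eq_integral m x))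
    (fun x ↦ by fun_prop) fun u hu ↦ ?_
  rw [sum_mul_mul_const_mul, hsign, one_mul]
  exact mul_nonneg (div_nonneg (pow_nonneg hu.1 m) (Nat.cast_nonneg _))
    (sum_mul_mul_inner_pow_mul_exp_nonneg h lam _ hu.1)
end

section
/- Let μ be the standard Gaussian measure on ℝⁿ, and let ν = ∑_i p_i E_{c_i} be a finite convex combination of stochastic exponentials (p_i ≥ 0, ∑ p_i = 1, c_i ∈ ℝⁿ). Then for every F = ∑_{k=1}^m λ_k E_{h_k} in the linear span of stochastic exponentials, ∫ (F ⋄ F) ν dμ ≤ ∫ F² ν dμ ≤ ∫ (F ⋄ F) ν dμ + ∫ |∇F|² ν dμ, where F ⋄ F := ∑_{j,k} λ_j λ_k E_{h_j + h_k}. -/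
/-!
Since `E_a E_b = e^{⟪a,b⟫} E_{a+b}` and `∫ E_a dμ = 1`, every integral in the statement is a
finite sum: with `qⱼ = λⱼ e^{⟪hⱼ,c⟫}` and `tⱼₖ = ⟪hⱼ,hₖ⟫`, integrating `F ⋄ F`, `F²` and `|∇F|²`
against `E_c` gives `∑ qⱼqₖ K(tⱼₖ)` for `K(t) = 1`, `eᵗ` and `t eᵗ` respectively. The two
inequalities then say that the kernels `eᵗ - 1` and `1 + t eᵗ - eᵗ`, evaluated on the Gram matrix
`(tⱼₖ)`, are positive semidefinite. Both have power series with nonnegative coefficients, and each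
Hadamard power of a Gram matrix is positive semidefinite by the Schur product theorem.
-/

open MeasureTheory Real RealInnerProductSpace

noncomputable def stdGaussian (n : ℕ) : Measure (EuclideanSpace ℝ (Fin n)) :=
  volume.withDensity
    (fun x => ENNReal.ofReal ((2 * π) ^ (-(n : ℝ) / 2) * Real.exp (-‖x‖ ^ 2 / 2)))

noncomputable def stochExp {n : ℕ} (a : EuclideanSpace ℝ (Fin n)) :
    EuclideanSpace ℝ (Fin n) → ℝ :=
  fun w => Real.exp (⟪a, w⟫ - ‖a‖ ^ 2 / 2)

open Finset

section PowerSeriesKernel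

variable {E : Type*} [NormedAddCommGroup E] [InnerProductSpace ℝ E] {ι : Type*} [Fintype ι]

theorem posSemidef_inner_pow (v : ι → E) (r : ℕ) :
    (Matrix.of fun j k => ⟪v j, v k⟫ ^ r).PosSemidef := by
  induction r with
  | zero =>
    simpa [Matrix.vecMulVec, Matrix.of] using Matrix.posSemidef_vecMulVec_self_star (1 : ι → ℝ)
  | succ r ih =>
    have hprod : (Matrix.of fun j k => ⟪v j, v k⟫ ^ (r + 1))
        = Matrix.hadamard (Matrix.of fun j k => ⟪v j, v k⟫ ^ r) (Matrix.gram ℝ v) := by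
      ext j k
      simp [pow_succ]
    rw [hprod]
    exact ih.hadamard (Matrix.posSemidef_gram ℝ v)

theorem sum_mul_mul_inner_pow_nonneg_s15 (q : ι → ℝ) (v : ι → E) (r : ℕ) :
    0 ≤ ∑ j, ∑ k, q j * q k * ⟪v j, v k⟫ ^ r := by
  refine ((posSemidef_inner_pow v r).dotProduct_mulVec_nonneg q).trans_eq ?_
  simp only [dotProduct, Matrix.mulVec, mul_sum, star_trivial, Matrix.of_apply]
  exact sum_congr rfl fun j _ => sum_congr rfl fun k _ => by ring

def HasNonnegPowerSeries (K : ℝ → ℝ) : Prop :=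
  ∃ a : ℕ → ℝ, (∀ r, 0 ≤ a r) ∧ ∀ t, HasSum (fun r => a r * t ^ r) (K t)

theorem HasNonnegPowerSeries.sum_mul_mul_inner_nonneg {K : ℝ → ℝ} (hK : HasNonnegPowerSeries K)
    (q : ι → ℝ) (v : ι → E) : 0 ≤ ∑ j, ∑ k, q j * q k * K ⟪v j, v k⟫ := by
  obtain ⟨a, ha, hsum⟩ := hK
  have hsum_form : HasSum (fun r => a r * ∑ j, ∑ k, q j * q k * ⟪v j, v k⟫ ^ r)
      (∑ j, ∑ k, q j * q k * K ⟪v j, v k⟫) := by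
    simp only [mul_sum, mul_left_comm (a _)]
    exact hasSum_sum fun j _ => hasSum_sum fun k _ => (hsum _).mul_left _
  exact hsum_form.nonneg fun r => mul_nonneg (ha r) (sum_mul_mul_inner_pow_nonneg_s15 q v r)

end PowerSeriesKernel

theorem Real.hasSum_pow_div_factorial (t : ℝ) :
    HasSum (fun r : ℕ => t ^ r / r.factorial) (exp t) := by
  rw [Real.exp_eq_exp_ℝ]
  exact NormedSpace.expSeries_div_hasSum_exp t

theorem hasSum_natCast_mul_pow_div_factorial (t : ℝ) :
    HasSum (fun r : ℕ => (r : ℝ) * t ^ r / r.factorial) (t * exp t) := by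
  refine (hasSum_nat_add_iff' 1).mp ?_
  simp only [sum_range_one, CharP.cast_eq_zero, zero_mul, zero_div, sub_zero]
  refine ((Real.hasSum_pow_div_factorial t).mul_left t).congr_fun fun r => ?_
  rw [Nat.factorial_succ]
  push_cast
  field_simp
  ring

theorem hasNonnegPowerSeries_exp_sub_one : HasNonnegPowerSeries fun t => exp t - 1 := by
  refine ⟨fun r => (r.factorial : ℝ)⁻¹ - if r = 0 then 1 else 0, fun r => ?_, fun t => ?_⟩
  · rcases r with _ | r <;> simp
  · refine ((Real.hasSum_pow_div_factorial t).sub (hasSum_ite_eq 0 1)).congr_fun fun r => ?_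
    rcases r with _ | r <;> simp [div_eq_inv_mul]

theorem hasNonnegPowerSeries_one_add_mul_exp_sub_exp :
    HasNonnegPowerSeries fun t => 1 + t * exp t - exp t := by
  refine ⟨fun r => ((r : ℝ) - 1) / r.factorial + if r = 0 then 1 else 0, fun r => ?_,
    fun t => ?_⟩
  · rcases r with _ | r
    · simp
    · simp only [Nat.cast_add_one, add_sub_cancel_right, Nat.add_one_ne_zero, if_false,
        add_zero]
      positivity
  · refine (((hasSum_ite_eq 0 1).add (hasSum_natCast_mul_pow_div_factorial t)).sub
      (Real.hasSum_pow_div_factorial t)).congr_fun fun r => ?_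
    rcases r with _ | r
    · simp
    · simp only [Nat.add_one_ne_zero, if_false, zero_add, add_zero]
      ring

theorem norm_sum_smul_sq {E ι : Type*} [NormedAddCommGroup E] [InnerProductSpace ℝ E]
    [Fintype ι] (r : ι → ℝ) (v : ι → E) :
    ‖∑ k, r k • v k‖ ^ 2 = ∑ j, ∑ k, r j * r k * ⟪v j, v k⟫ := by
  simp only [← real_inner_self_eq_norm_sq, sum_inner, inner_sum, real_inner_smul_left,
    real_inner_smul_right, mul_assoc]
  exact sum_congr rfl fun j _ => sum_congr rfl fun k _ => by rw [real_inner_comm]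

section Gaussian

variable {n : ℕ}

noncomputable def stdGaussianPDF (n : ℕ) (x : EuclideanSpace ℝ (Fin n)) : ℝ :=
  (2 * π) ^ (-(n : ℝ) / 2) * exp (-‖x‖ ^ 2 / 2)

theorem stdGaussianPDF_nonneg (x : EuclideanSpace ℝ (Fin n)) : 0 ≤ stdGaussianPDF n x := by
  unfold stdGaussianPDF
  positivity

theorem measurable_stdGaussianPDF : Measurable (stdGaussianPDF n) := by
  unfold stdGaussianPDF
  fun_prop

theorem stdGaussian_eq_withDensity :
    stdGaussian n = volume.withDensity fun x => ENNReal.ofReal (stdGaussianPDF n x) :=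
  rfl

theorem integral_stdGaussianPDF : ∫ x, stdGaussianPDF n x = 1 := by
  have h := GaussianFourier.integral_rexp_neg_mul_sq_norm (V := EuclideanSpace ℝ (Fin n))
    (b := 1 / 2) (by norm_num)
  simp only [finrank_euclideanSpace_fin] at h
  simp only [stdGaussianPDF, integral_const_mul]
  have hexp : ∀ v : EuclideanSpace ℝ (Fin n), -‖v‖ ^ 2 / 2 = -(1 / 2) * ‖v‖ ^ 2 := fun v => by
    ring
  rw [integral_congr_ae (ae_of_all _ fun v => by rw [hexp]), h, div_div_eq_mul_div, div_one,
    mul_comm π 2, neg_div, rpow_neg (by positivity), inv_mul_cancel₀ (by positivity)]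

theorem integrable_stdGaussianPDF : Integrable (stdGaussianPDF n) :=
  Integrable.of_integral_ne_zero (by rw [integral_stdGaussianPDF]; exact one_ne_zero)

theorem integral_stdGaussian (f : EuclideanSpace ℝ (Fin n) → ℝ) :
    ∫ x, f x ∂stdGaussian n = ∫ x, stdGaussianPDF n x * f x := by
  rw [stdGaussian_eq_withDensity, integral_withDensity_eq_integral_toReal_smul
    measurable_stdGaussianPDF.ennreal_ofReal (ae_of_all _ fun _ => ENNReal.ofReal_lt_top)]
  simp_rw [ENNReal.toReal_ofReal (stdGaussianPDF_nonneg _), smul_eq_mul]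

theorem integrable_stdGaussian_iff (f : EuclideanSpace ℝ (Fin n) → ℝ) :
    Integrable f (stdGaussian n) ↔ Integrable (fun x => stdGaussianPDF n x * f x) := by
  rw [stdGaussian_eq_withDensity, integrable_withDensity_iff_integrable_smul'
    measurable_stdGaussianPDF.ennreal_ofReal (ae_of_all _ fun _ => ENNReal.ofReal_lt_top)]
  simp_rw [ENNReal.toReal_ofReal (stdGaussianPDF_nonneg _), smul_eq_mul]

theorem stdGaussianPDF_mul_stochExp (a w : EuclideanSpace ℝ (Fin n)) :
    stdGaussianPDF n w * stochExp a w = stdGaussianPDF n (w - a) := by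
  rw [stdGaussianPDF, stdGaussianPDF, stochExp, mul_assoc, ← exp_add, norm_sub_sq_real,
    real_inner_comm]
  ring_nf

theorem integral_stochExp (a : EuclideanSpace ℝ (Fin n)) :
    ∫ w, stochExp a w ∂stdGaussian n = 1 := by
  simp_rw [integral_stdGaussian, stdGaussianPDF_mul_stochExp]
  rw [integral_sub_right_eq_self (stdGaussianPDF n) a, integral_stdGaussianPDF]

theorem integrable_stochExp (a : EuclideanSpace ℝ (Fin n)) :
    Integrable (stochExp a) (stdGaussian n) := by
  simp_rw [integrable_stdGaussian_iff, stdGaussianPDF_mul_stochExp]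
  exact integrable_stdGaussianPDF.comp_sub_right a

theorem stochExp_mul_stochExp (a b w : EuclideanSpace ℝ (Fin n)) :
    stochExp a w * stochExp b w = exp ⟪a, b⟫ * stochExp (a + b) w := by
  simp only [stochExp, ← exp_add, inner_add_left, norm_add_sq_real]
  ring_nf

theorem stochExp_add (a b w : EuclideanSpace ℝ (Fin n)) :
    stochExp (a + b) w = exp (-⟪a, b⟫) * (stochExp a w * stochExp b w) := by
  rw [stochExp_mul_stochExp, ← mul_assoc, ← exp_add, neg_add_cancel, exp_zero, one_mul]

theorem stochExp_mul_stochExp_mul_stochExp (a b c w : EuclideanSpace ℝ (Fin n)) :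
    stochExp a w * stochExp b w * stochExp c w
      = exp (⟪a, b⟫ + ⟪a + b, c⟫) * stochExp (a + b + c) w := by
  rw [stochExp_mul_stochExp, mul_assoc, stochExp_mul_stochExp, ← mul_assoc, ← exp_add]

theorem integral_stochExp_mul_stochExp_mul_stochExp (a b c : EuclideanSpace ℝ (Fin n)) :
    ∫ w, stochExp a w * stochExp b w * stochExp c w ∂stdGaussian n
      = exp (⟪a, b⟫ + ⟪a + b, c⟫) := by
  simp_rw [stochExp_mul_stochExp_mul_stochExp, integral_const_mul, integral_stochExp, mul_one]

theorem integrable_stochExp_mul_stochExp_mul_stochExp (a b c : EuclideanSpace ℝ (Fin n)) :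
    Integrable (fun w => stochExp a w * stochExp b w * stochExp c w) (stdGaussian n) := by
  simp_rw [stochExp_mul_stochExp_mul_stochExp]
  exact (integrable_stochExp _).const_mul _

theorem hasFDerivAt_stochExp (a w : EuclideanSpace ℝ (Fin n)) :
    HasFDerivAt (stochExp a) (stochExp a w • innerSL ℝ a) w :=
  ((innerSL ℝ a).hasFDerivAt.sub_const _).exp

theorem gradient_sum_mul_stochExp {ι : Type*} [Fintype ι] (lam : ι → ℝ)
    (h : ι → EuclideanSpace ℝ (Fin n)) (w : EuclideanSpace ℝ (Fin n)) :
    gradient (fun w => ∑ k, lam k * stochExp (h k) w) w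
      = ∑ k, (lam k * stochExp (h k) w) • h k := by
  refine (hasGradientAt_iff_hasFDerivAt.mpr ((HasFDerivAt.fun_sum fun k _ =>
    (hasFDerivAt_stochExp (h k) w).const_mul (lam k)).congr_fderiv ?_)).gradient
  ext v
  simp [mul_assoc]

end Gaussian

section Mixture

variable {E ι κ : Type*} [NormedAddCommGroup E] [InnerProductSpace ℝ E] [Fintype ι] [Fintype κ]

noncomputable def mixtureForm (p : κ → ℝ) (c : κ → E) (lam : ι → ℝ) (h : ι → E)
    (K : ℝ → ℝ) : ℝ :=
  ∑ i, p i * ∑ j, ∑ k, (lam j * exp ⟪h j, c i⟫) * (lam k * exp ⟪h k, c i⟫) * K ⟪h j, h k⟫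

variable (p : κ → ℝ) (c : κ → E) (lam : ι → ℝ) (h : ι → E)

theorem mixtureForm_add (K₁ K₂ : ℝ → ℝ) :
    mixtureForm p c lam h K₁ + mixtureForm p c lam h K₂
      = mixtureForm p c lam h fun t => K₁ t + K₂ t := by
  simp only [mixtureForm, ← sum_add_distrib, ← mul_add]

theorem mixtureForm_sub (K₁ K₂ : ℝ → ℝ) :
    mixtureForm p c lam h K₁ - mixtureForm p c lam h K₂
      = mixtureForm p c lam h fun t => K₁ t - K₂ t := by
  simp only [mixtureForm, ← sum_sub_distrib, ← mul_sub]

variable {p}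

theorem mixtureForm_nonneg (hp : ∀ i, 0 ≤ p i) {K : ℝ → ℝ} (hK : HasNonnegPowerSeries K) :
    0 ≤ mixtureForm p c lam h K :=
  sum_nonneg fun i _ => mul_nonneg (hp i) (hK.sum_mul_mul_inner_nonneg _ h)

end Mixture

theorem integral_mul_sum_mul_stochExp_of_eq {n : ℕ} {ι κ : Type*} [Fintype ι] [Fintype κ]
    (p : κ → ℝ) (c : κ → EuclideanSpace ℝ (Fin n)) (lam : ι → ℝ)
    (h : ι → EuclideanSpace ℝ (Fin n)) {G : EuclideanSpace ℝ (Fin n) → ℝ} (K : ℝ → ℝ)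
    (hG : ∀ w, G w = ∑ j, ∑ k, lam j * lam k * K ⟪h j, h k⟫ *
      (stochExp (h j) w * stochExp (h k) w)) :
    ∫ w, G w * ∑ i, p i * stochExp (c i) w ∂stdGaussian n
      = mixtureForm p c lam h fun t => K t * exp t := by
  have hexpand : ∀ w, G w * ∑ i, p i * stochExp (c i) w = ∑ i, ∑ j, ∑ k,
      p i * (lam j * lam k * K ⟪h j, h k⟫) *
        (stochExp (h j) w * stochExp (h k) w * stochExp (c i) w) := fun w => by
    rw [hG, mul_comm, sum_mul_sum]
    simp only [mul_sum]
    exact sum_congr rfl fun i _ => sum_congr rfl fun j _ => sum_congr rfl fun k _ => by ring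
  have hint := fun i j k => (integrable_stochExp_mul_stochExp_mul_stochExp (h j) (h k)
    (c i)).const_mul (p i * (lam j * lam k * K ⟪h j, h k⟫))
  simp only [hexpand, integral_finsetSum _ fun _ _ => integrable_finsetSum _ fun _ _ =>
      integrable_finsetSum _ fun _ _ => hint _ _ _,
    integral_finsetSum _ fun _ _ => integrable_finsetSum _ fun _ _ => hint _ _ _,
    integral_finsetSum _ fun _ _ => hint _ _ _, integral_const_mul,
    integral_stochExp_mul_stochExp_mul_stochExp, mixtureForm, mul_sum]
  refine sum_congr rfl fun i _ => sum_congr rfl fun j _ => sum_congr rfl fun k _ => ?_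
  rw [inner_add_left, exp_add, exp_add]
  ring

theorem wick_poincare_finite_rank_general (n N m : ℕ)
    (p : Fin N → ℝ) (c : Fin N → EuclideanSpace ℝ (Fin n))
    (hp : ∀ i, 0 ≤ p i)
    (h : Fin m → EuclideanSpace ℝ (Fin n)) (lam : Fin m → ℝ)
    (ν : EuclideanSpace ℝ (Fin n) → ℝ) (hν : ν = fun w => ∑ i, p i * stochExp (c i) w)
    (F : EuclideanSpace ℝ (Fin n) → ℝ) (hF : F = fun w => ∑ k, lam k * stochExp (h k) w)
    (WF : EuclideanSpace ℝ (Fin n) → ℝ)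
    (hWF : WF = fun w => ∑ j, ∑ k, lam j * lam k * stochExp (h j + h k) w) :
    (∫ w, WF w * ν w ∂(stdGaussian n)) ≤ ∫ w, F w ^ 2 * ν w ∂(stdGaussian n) ∧
      (∫ w, F w ^ 2 * ν w ∂(stdGaussian n)) ≤
        (∫ w, WF w * ν w ∂(stdGaussian n)) +
          ∫ w, ‖gradient F w‖ ^ 2 * ν w ∂(stdGaussian n) := by
  subst hν
  have hWick : ∫ w, WF w * ∑ i, p i * stochExp (c i) w ∂stdGaussian n
      = mixtureForm p c lam h fun _ => 1 := by
    rw [integral_mul_sum_mul_stochExp_of_eq p c lam h (fun t => exp (-t)) fun w => ?_]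
    · simp only [← exp_add, neg_add_cancel, exp_zero]
    · simp only [hWF, stochExp_add, mul_assoc]
  have hSq : ∫ w, F w ^ 2 * ∑ i, p i * stochExp (c i) w ∂stdGaussian n
      = mixtureForm p c lam h exp := by
    rw [integral_mul_sum_mul_stochExp_of_eq p c lam h (fun _ => 1) fun w => ?_]
    · simp only [one_mul]
    · simp only [hF, sq, sum_mul_sum, mul_one, mul_mul_mul_comm]
  have hGrad : ∫ w, ‖gradient F w‖ ^ 2 * ∑ i, p i * stochExp (c i) w ∂stdGaussian n
      = mixtureForm p c lam h fun t => t * exp t :=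
    integral_mul_sum_mul_stochExp_of_eq p c lam h id fun w => by
      simp only [hF, gradient_sum_mul_stochExp, norm_sum_smul_sq, id]
      exact sum_congr rfl fun j _ => sum_congr rfl fun k _ => by ring
  rw [hWick, hSq, hGrad]
  refine ⟨sub_nonneg.mp ?_, sub_nonneg.mp ?_⟩
  · rw [mixtureForm_sub]
    exact mixtureForm_nonneg c lam h hp hasNonnegPowerSeries_exp_sub_one
  · rw [mixtureForm_add, mixtureForm_sub]
    exact mixtureForm_nonneg c lam h hp hasNonnegPowerSeries_one_add_mul_exp_sub_exp

theorem wick_poincare_finite_rank (n N m : ℕ)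
    (p : Fin N → ℝ) (c : Fin N → EuclideanSpace ℝ (Fin n))
    (hp : ∀ i, 0 ≤ p i) (hp1 : ∑ i, p i = 1)
    (h : Fin m → EuclideanSpace ℝ (Fin n)) (lam : Fin m → ℝ)
    (ν : EuclideanSpace ℝ (Fin n) → ℝ) (hν : ν = fun w => ∑ i, p i * stochExp (c i) w)
    (F : EuclideanSpace ℝ (Fin n) → ℝ) (hF : F = fun w => ∑ k, lam k * stochExp (h k) w)
    (WF : EuclideanSpace ℝ (Fin n) → ℝ)
    (hWF : WF = fun w => ∑ j, ∑ k, lam j * lam k * stochExp (h j + h k) w) :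
    (∫ w, WF w * ν w ∂(stdGaussian n)) ≤ ∫ w, F w ^ 2 * ν w ∂(stdGaussian n) ∧
      (∫ w, F w ^ 2 * ν w ∂(stdGaussian n)) ≤
        (∫ w, WF w * ν w ∂(stdGaussian n)) +
          ∫ w, ‖gradient F w‖ ^ 2 * ν w ∂(stdGaussian n) :=
  wick_poincare_finite_rank_general n N m p c hp h lam ν hν F hF WF hWF
end
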